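/- The non-associative Lyndon-Shirshov words form a linear basis of the free Lie algebra Lie(X), realized as the Lie subalgebra of the free associative algebra k⟨X⟩ generated by X. -/

import Mathlib

open List

/-- The lexicographic order used by Shirshov: a word is *greater* than any of its
proper extensions (`w > w ++ t` for `t ≠ []`), and otherwise words are compared
letterwise by the order on the alphabet.  `LSLt u v` means `u < v`. -/
def LSLt {X : Type*} [LinearOrder X] : List X → List X → Prop
  | _ :: _, [] => True
  | [], _ => False
  | a :: u, b :: v => a < b ∨ (a = b ∧ LSLt u v)

/-- `u ≤ v` in the Shirshov lexicographic order. -/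
def LSLe {X : Type*} [LinearOrder X] (u v : List X) : Prop := u = v ∨ LSLt u v

/-- The degree-lexicographic order: compare first by length, then lexicographically. -/
def DegLt {X : Type*} [LinearOrder X] (u v : List X) : Prop :=
  u.length < v.length ∨ (u.length = v.length ∧ LSLt u v)

/-- `≤` in the degree-lexicographic order. -/
def DegLe {X : Type*} [LinearOrder X] (u v : List X) : Prop := u = v ∨ DegLt u v

/-- An associative Lyndon–Shirshov word: a nonempty word `u` such that `vw > wv`
(lexicographically) for every factorization `u = vw` into nonempty parts. -/
def IsALSW {X : Type*} [LinearOrder X] (u : List X) : Prop :=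
  u ≠ [] ∧ ∀ v w : List X, v ≠ [] → w ≠ [] → u = v ++ w → LSLt (w ++ v) (v ++ w)

/-- The underlying associative word of a non-associative word (binary bracketing). -/
def wordOf {X : Type*} : FreeMagma X → List X
  | .of x => [x]
  | .mul a b => wordOf a ++ wordOf b

/-- `w` is the longest proper suffix of `u` which is an ALSW. -/
def LongestALSWProperSuffix {X : Type*} [LinearOrder X] (u w : List X) : Prop :=
  IsALSW w ∧ (∃ v : List X, v ≠ [] ∧ u = v ++ w) ∧
    ∀ w' : List X, IsALSW w' → (∃ v' : List X, v' ≠ [] ∧ u = v' ++ w') →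
      w'.length ≤ w.length

/-- The standard (up-to-down) bracketing of an ALSW: `[x] = x` and
`[u] = [[v][w]]` where `w` is the longest proper ALSW suffix of `u`. -/
inductive IsStdBracketing {X : Type*} [LinearOrder X] : List X → FreeMagma X → Prop
  | of (x : X) : IsStdBracketing [x] (.of x)
  | mul {v w : List X} {tv tw : FreeMagma X} :
      IsALSW (v ++ w) → LongestALSWProperSuffix (v ++ w) w →
      IsStdBracketing v tv → IsStdBracketing w tw →
      IsStdBracketing (v ++ w) (tv * tw)

/-- A non-associative Lyndon–Shirshov word, via Shirshov's conditions:
the underlying word is an ALSW, both halves are NLSWs, and the right factor of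
the left half is `≤` the right half. -/
inductive IsNLSW {X : Type*} [LinearOrder X] : FreeMagma X → Prop
  | of (x : X) : IsNLSW (.of x)
  | mul {tv tw : FreeMagma X} :
      IsNLSW tv → IsNLSW tw → IsALSW (wordOf (tv * tw)) →
      (∀ t₁ t₂ : FreeMagma X, tv = t₁ * t₂ → LSLe (wordOf t₂) (wordOf tw)) →
      IsNLSW (tv * tw)

/-- The free associative algebra `k⟨X⟩`, realized as the monoid algebra of the
free monoid on `X`. -/
abbrev FreeAssocAlg (k X : Type*) [Field k] := MonoidAlgebra k (FreeMonoid X)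

/-- The monomial of `k⟨X⟩` corresponding to a word `u ∈ X*`. -/
noncomputable def monom (k : Type*) [Field k] {X : Type*} (u : List X) : FreeAssocAlg k X :=
  MonoidAlgebra.single (FreeMonoid.ofList u) 1

/-- The coefficient of the word `u` in `f ∈ k⟨X⟩`. -/
def coeffW {k X : Type*} [Field k] (f : FreeAssocAlg k X) (u : List X) : k :=
  f.coeff (FreeMonoid.ofList u)

/-- `u` is the leading word of `f` with respect to the deg-lex order. -/
def IsLeadingWord {k X : Type*} [Field k] [LinearOrder X]
    (f : FreeAssocAlg k X) (u : List X) : Prop :=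
  coeffW f u ≠ 0 ∧ ∀ w : List X, coeffW f w ≠ 0 → w = u ∨ DegLt w u

/-- `f` is monic: its leading coefficient is `1`. -/
def IsMonic {k X : Type*} [Field k] [LinearOrder X] (f : FreeAssocAlg k X) : Prop :=
  ∃ u : List X, IsLeadingWord f u ∧ coeffW f u = 1

/-- The generator `x ∈ X` inside `k⟨X⟩`. -/
noncomputable def gen (k : Type*) [Field k] {X : Type*} (x : X) : FreeAssocAlg k X :=
  monom k [x]

attribute [local instance 100] LieRing.ofAssociativeRing

/-- The free Lie algebra `Lie(X)`: the Lie subalgebra of `k⟨X⟩` generated by `X`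
under the commutator bracket. -/
noncomputable def LieX (k X : Type*) [Field k] : LieSubalgebra k (FreeAssocAlg k X) :=
  LieSubalgebra.lieSpan k _ (Set.range (gen k (X := X)))

/-- Evaluation of a non-associative word in `k⟨X⟩`, interpreting the binary
operation as the commutator `(ab) = ab - ba`. -/
noncomputable def evalC {k X : Type*} [Field k] : FreeMagma X → FreeAssocAlg k X
  | .of x => gen k x
  | .mul a b => evalC a * evalC b - evalC b * evalC a

/-!
The expansion of the standard bracketing `[u]` of an ALSW `u` in `k⟨X⟩` has `u` as its
lexicographically largest word, with coefficient `1`, and all its other words are rearrangements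
of `u`; distinct ALSWs therefore give linearly independent elements.

They also span `Lie(X)`: their span contains `X`, and it is closed under brackets. For standard
`p`, `q` with `q < p`, either `p * q` meets Shirshov's condition and is itself standard, or
`p = p₁ * p₂` with `q < p₂`, and the Jacobi identity
`⁅⁅p₁, p₂⁆, q⁆ = ⁅p₁, ⁅p₂, q⁆⁆ - ⁅p₂, ⁅p₁, q⁆⁆` rewrites the bracket through brackets whose
words are shorter, or are rearrangements of `p ++ q` lexicographically below it, or equal
`p ++ q` with a shorter left factor. This order is well founded.
-/

open OrderDual

/-- Through this key, `LSLt` becomes the order dual of the lexicographic order on `List Xᵒᵈ`. -/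
def lexKey {X : Type*} (u : List X) : (List Xᵒᵈ)ᵒᵈ := toDual (u.map toDual)

lemma lexKey_injective {X : Type*} : Function.Injective (lexKey : List X → (List Xᵒᵈ)ᵒᵈ) :=
  fun _ _ h => map_injective_iff.2 toDual.injective (toDual.injective h)

section ShirshovOrder
variable {X : Type*} [LinearOrder X]

lemma lslt_iff_lexKey_lt {u v : List X} : LSLt u v ↔ lexKey u < lexKey v := by
  induction u generalizing v with
  | nil => cases v <;> simp [LSLt, lexKey]
  | cons a u ih =>
    cases v with
    | nil => simp [LSLt, lexKey]
    | cons b v =>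
      simp only [LSLt, lexKey, map_cons, toDual_lt_toDual, cons_lt_cons_iff] at ih ⊢
      rw [ih]
      simp [eq_comm]

lemma lsle_iff_lexKey_le {u v : List X} : LSLe u v ↔ lexKey u ≤ lexKey v := by
  rw [LSLe, lslt_iff_lexKey_lt, le_iff_eq_or_lt, lexKey_injective.eq_iff]

lemma lslt_irrefl (u : List X) : ¬ LSLt u u := by
  simp [lslt_iff_lexKey_lt]

lemma LSLt.trans {u v w : List X} (h₁ : LSLt u v) (h₂ : LSLt v w) : LSLt u w := by
  rw [lslt_iff_lexKey_lt] at *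
  exact h₁.trans h₂

lemma LSLt.asymm {u v : List X} (h : LSLt u v) : ¬ LSLt v u :=
  fun h' => lslt_irrefl u (h.trans h')

lemma lslt_trichotomy (u v : List X) : LSLt u v ∨ u = v ∨ LSLt v u := by
  simp only [lslt_iff_lexKey_lt, ← lexKey_injective.eq_iff]
  exact lt_trichotomy _ _

lemma LSLt.lsle {u v : List X} (h : LSLt u v) : LSLe u v := Or.inr h

lemma lsle_refl (u : List X) : LSLe u u := Or.inl rfl

lemma LSLe.trans {u v w : List X} (h₁ : LSLe u v) (h₂ : LSLe v w) : LSLe u w := by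
  rw [lsle_iff_lexKey_le] at *
  exact h₁.trans h₂

lemma LSLe.trans_lslt {u v w : List X} (h₁ : LSLe u v) (h₂ : LSLt v w) : LSLt u w := by
  rw [lsle_iff_lexKey_le] at h₁
  rw [lslt_iff_lexKey_lt] at *
  exact h₁.trans_lt h₂

lemma LSLt.trans_lsle {u v w : List X} (h₁ : LSLt u v) (h₂ : LSLe v w) : LSLt u w := by
  rw [lsle_iff_lexKey_le] at h₂
  rw [lslt_iff_lexKey_lt] at *
  exact h₁.trans_le h₂

lemma lslt_of_not_lsle {u v : List X} (h : ¬ LSLe u v) : LSLt v u := by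
  rw [lsle_iff_lexKey_le, not_le] at h
  exact lslt_iff_lexKey_lt.2 h

lemma lslt_append_left_iff (u : List X) {v w : List X} :
    LSLt (u ++ v) (u ++ w) ↔ LSLt v w := by
  induction u with
  | nil => rfl
  | cons a u ih => simp [LSLt, ih]

lemma LSLe.append_left {v w : List X} (h : LSLe v w) (u : List X) : LSLe (u ++ v) (u ++ w) := by
  rcases h with rfl | h
  · exact lsle_refl _
  · exact ((lslt_append_left_iff u).2 h).lsle

lemma lslt_append_self {u t : List X} (ht : t ≠ []) : LSLt (u ++ t) u := by
  induction u with
  | nil => cases t with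
    | nil => exact absurd rfl ht
    | cons _ _ => trivial
  | cons a u ih => exact Or.inr ⟨rfl, ih⟩

lemma LSLt.forall_append_or_eq_append {s t : List X} (h : LSLt s t) :
    (∀ α β : List X, LSLt (s ++ α) (t ++ β)) ∨ ∃ r, r ≠ [] ∧ s = t ++ r := by
  induction s generalizing t with
  | nil => cases t <;> exact absurd h (by simp [LSLt])
  | cons a s ih =>
    cases t with
    | nil => exact Or.inr ⟨a :: s, cons_ne_nil _ _, rfl⟩
    | cons b t =>
      rcases h with hab | ⟨rfl, h⟩
      · exact Or.inl fun _ _ => Or.inl hab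
      · rcases ih h with h' | ⟨r, hr, rfl⟩
        · exact Or.inl fun α β => Or.inr ⟨rfl, h' α β⟩
        · exact Or.inr ⟨r, hr, rfl⟩

lemma LSLt.append_of_length_le {s t : List X} (h : LSLt s t) (hl : s.length ≤ t.length)
    (α β : List X) : LSLt (s ++ α) (t ++ β) := by
  rcases h.forall_append_or_eq_append with h' | ⟨r, hr, rfl⟩
  · exact h' α β
  · simp only [length_append] at hl
    exact absurd (length_eq_zero_iff.1 (by omega)) hr

lemma LSLe.append_of_length_eq {s t : List X} (h : LSLe s t) (hl : s.length = t.length)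
    (v : List X) : LSLe (s ++ v) (t ++ v) := by
  rcases h with rfl | h
  · exact lsle_refl _
  · exact (h.append_of_length_le hl.le v v).lsle

end ShirshovOrder

lemma exists_of_append_eq_append_of_length_le {α : Type*} {u v r s : List α}
    (h : u ++ v = r ++ s) (hl : s.length ≤ v.length) : ∃ p, r = u ++ p ∧ v = p ++ s := by
  rcases append_eq_append_iff.1 h with ⟨p, hr, hv⟩ | ⟨p, hu, hs⟩
  · exact ⟨p, hr, hv⟩
  · obtain rfl : p = [] := by
      rw [hs, length_append] at hl
      exact length_eq_zero_iff.1 (by omega)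
    exact ⟨[], by simp [hu], by simp [hs]⟩

section ALSW
variable {X : Type*} [LinearOrder X]

lemma isALSW_singleton (x : X) : IsALSW [x] := by
  refine ⟨cons_ne_nil _ _, fun v w hv hw h => absurd (congrArg length h) ?_⟩
  have := length_pos_iff.2 hv
  have := length_pos_iff.2 hw
  simp only [length_append, length_singleton]
  omega

lemma IsALSW.not_border {u s e t : List X} (hu : IsALSW u) (hs : s ≠ []) (he : e ≠ [])
    (ht : t ≠ []) (h₁ : u = s ++ e) (h₂ : u = t ++ s) : False := by
  have hte : t.length = e.length := by
    have := congrArg length (h₁.symm.trans h₂)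
    simp only [length_append] at this
    omega
  have hst := hu.2 t s ht hs h₂
  have hes := hu.2 s e hs he h₁
  rw [← h₂, h₁, lslt_append_left_iff] at hst
  rw [← h₁, h₂] at hes
  exact hes.asymm (hst.append_of_length_le hte.le s s)

lemma IsALSW.lslt_of_eq_append {u r s : List X} (hu : IsALSW u) (hr : r ≠ []) (hs : s ≠ [])
    (h : u = r ++ s) : LSLt s u := by
  rcases lslt_trichotomy s u with hlt | rfl | hgt
  · exact hlt
  · exact absurd (self_eq_append_left.1 h) hr
  · rcases hgt.forall_append_or_eq_append with hd | ⟨r', hr', h'⟩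
    · have h₁ := hd [] r
      have h₂ := hu.2 r s hr hs h
      rw [append_nil] at h₁
      rw [← h] at h₂
      exact absurd (h₁.trans h₂) (lslt_irrefl u)
    · exact (hu.not_border hs hr' hr h' h).elim

lemma isALSW_of_forall_lslt {u : List X} (hu : u ≠ [])
    (H : ∀ r s : List X, r ≠ [] → s ≠ [] → u = r ++ s → LSLt s u) : IsALSW u := by
  refine ⟨hu, fun v w hv hw h => ?_⟩
  have hl : w.length ≤ u.length := by simp [h]
  simpa [← h] using (H v w hv hw h).append_of_length_le hl v []

lemma exists_isALSW_maxSuffix {x : List X} (hx : x ≠ []) :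
    ∃ z, z ≠ [] ∧ (∃ p, x = p ++ z) ∧ IsALSW z ∧
      ∀ y p, y ≠ [] → x = p ++ y → LSLe y z := by
  classical
  obtain ⟨z, hz, hmax⟩ := ((x.tails.filter (· ≠ [])).toFinset).exists_max_image lexKey
    ⟨x, by simp [hx]⟩
  simp only [mem_toFinset, mem_filter, mem_tails, decide_eq_true_eq] at hz hmax
  obtain ⟨⟨p, hp⟩, hz⟩ := hz
  have hmax' : ∀ y p', y ≠ [] → x = p' ++ y → LSLe y z := fun y p' hy h =>
    lsle_iff_lexKey_le.2 (hmax y ⟨⟨p', h.symm⟩, hy⟩)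
  refine ⟨z, hz, ⟨p, hp.symm⟩, isALSW_of_forall_lslt hz fun r s hr hs h => ?_, hmax'⟩
  rcases hmax' s (p ++ r) hs (by rw [← hp, h, append_assoc]) with rfl | hlt
  · exact absurd (self_eq_append_left.1 h) hr
  · exact hlt

lemma IsALSW.append {a b : List X} (ha : IsALSW a) (hb : IsALSW b) (h : LSLt b a) :
    IsALSW (a ++ b) := by
  have hb_ab : LSLt b (a ++ b) := by
    rcases h.forall_append_or_eq_append with hd | ⟨r, hr, hext⟩
    · simpa using hd [] b
    · have hrb := hb.lslt_of_eq_append ha.1 hr hext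
      rw [hext] at hrb ⊢
      rwa [lslt_append_left_iff]
  refine isALSW_of_forall_lslt (by simp [ha.1]) fun r s hr hs h => ?_
  rcases le_or_gt s.length b.length with hle | hgt
  · obtain ⟨p, -, hp⟩ := exists_of_append_eq_append_of_length_le h hle
    rcases eq_or_ne p [] with rfl | hp'
    · simpa [hp] using hb_ab
    · exact (hb.lslt_of_eq_append hp' hs hp).trans hb_ab
  · obtain ⟨p, hp₁, hp₂⟩ := exists_of_append_eq_append_of_length_le h.symm hgt.le
    have hpne : p ≠ [] := by
      rintro rfl
      rw [nil_append] at hp₂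
      exact lt_irrefl _ (hp₂ ▸ hgt)
    rw [hp₂]
    exact (ha.lslt_of_eq_append hr hpne hp₁).append_of_length_le (by simp [hp₁]) b b

lemma IsALSW.lslt_append_comm {a b : List X} (ha : IsALSW a) (hb : IsALSW b) (h : LSLt b a) :
    LSLt (b ++ a) (a ++ b) :=
  (ha.append hb h).2 a b ha.1 hb.1 rfl

lemma IsALSW.lslt_of_append {v w : List X} (h : IsALSW (v ++ w)) (hv : IsALSW v)
    (hw : IsALSW w) : LSLt w v := by
  rcases lslt_trichotomy w v with hlt | rfl | hgt
  · exact hlt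
  · exact absurd (h.2 w w hw.1 hw.1 rfl) (lslt_irrefl _)
  · exact absurd (h.2 v w hv.1 hw.1 rfl) (hw.lslt_append_comm hv hgt).asymm

lemma LongestALSWProperSuffix.isALSW_left {u v w : List X} (hl : LongestALSWProperSuffix u w)
    (hu : IsALSW u) (huvw : u = v ++ w) (hv : v ≠ []) : IsALSW v := by
  refine isALSW_of_forall_lslt hv fun r t hr ht hsplit => ?_
  have htw : LSLt (t ++ w) u :=
    hu.lslt_of_eq_append hr (by simp [ht]) (by rw [huvw, hsplit, append_assoc])
  rcases lslt_trichotomy t v with hlt | rfl | hgt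
  · exact hlt
  · exact absurd (self_eq_append_left.1 hsplit) hr
  · rcases hgt.forall_append_or_eq_append with hd | ⟨r', hr', hext⟩
    · exact absurd ((huvw ▸ hd w w).trans htw) (lslt_irrefl u)
    · -- `t` is a border of `v`; the largest suffix of `r' ++ w` then beats `w`
      rw [huvw, hext, append_assoc, lslt_append_left_iff] at htw
      obtain ⟨z, hz, ⟨p, hp⟩, hzA, hmax⟩ := exists_isALSW_maxSuffix (x := r' ++ w) (by simp [hr'])
      have hzw : z.length ≤ w.length :=
        hl.2.2 z hzA ⟨t ++ p, by simp [ht], by rw [huvw, hext, append_assoc, hp, append_assoc]⟩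
      obtain ⟨q, -, hq⟩ := exists_of_append_eq_append_of_length_le hp hzw
      rcases eq_or_ne q [] with rfl | hq'
      · rw [nil_append] at hq
        exact absurd (htw.trans_lsle (hq ▸ hmax (r' ++ w) [] (by simp [hr']) rfl))
          (lslt_irrefl w)
      · exact absurd ((hmax w r' hl.1.1 rfl).trans_lslt (hl.1.lslt_of_eq_append hq' hz hq))
          (lslt_irrefl w)

lemma exists_longestALSWProperSuffix {u w v : List X} (hw : IsALSW w) (hv : v ≠ [])
    (h : u = v ++ w) : ∃ m, LongestALSWProperSuffix u m := by
  classical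
  let P : ℕ → Prop := fun n => ∃ w, w.length = n ∧ IsALSW w ∧ ∃ v, v ≠ [] ∧ u = v ++ w
  have hlen : ∀ {v w : List X}, u = v ++ w → w.length ≤ u.length := fun h => by simp [h]
  obtain ⟨m, hm, hmA, hmv⟩ : P (Nat.findGreatest P u.length) :=
    Nat.findGreatest_spec (hlen h) ⟨w, rfl, hw, v, hv, h⟩
  refine ⟨m, hmA, hmv, fun w' hw' ⟨v', hv', h'⟩ => hm ▸ ?_⟩
  exact Nat.le_findGreatest (hlen h') ⟨w', rfl, hw', v', hv', h'⟩

lemma not_isALSW_append_of_longest {u w c : List X}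
    (hl : LongestALSWProperSuffix u w) (hc : IsALSW c) (hwc : LSLe w c) :
    ∀ {r s : List X}, r ≠ [] → s ≠ [] → u = r ++ s → ¬ IsALSW (s ++ c) := by
  intro r s
  induction hn : s.length using Nat.strong_induction_on generalizing r s with
  | _ n ih =>
  intro hr hs hurs hsc
  by_cases hsA : IsALSW s
  · -- `s` is an ALSW suffix of `u`, so `s ≤ w ≤ c`, while `s ++ c` forces `c < s`
    obtain ⟨v, hv, huvw⟩ := hl.2.1
    obtain ⟨p, -, hp⟩ := exists_of_append_eq_append_of_length_le (huvw.symm.trans hurs)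
      (hl.2.2 s hsA ⟨r, hr, hurs⟩)
    have hsw : LSLe s w := by
      rcases eq_or_ne p [] with rfl | hp'
      · simpa [hp] using lsle_refl s
      · exact (hl.1.lslt_of_eq_append hp' hs hp).lsle
    exact lslt_irrefl c ((hsc.lslt_of_append hsA hc).trans_lsle (hsw.trans hwc))
  · -- the longest proper ALSW suffix of `s ++ c` is `p ++ c` for a shorter suffix `p` of `s`
    obtain ⟨m, hm⟩ := exists_longestALSWProperSuffix hc hs rfl
    obtain ⟨vm, hvm, hvmeq⟩ := hm.2.1
    have hcm : c.length ≤ m.length := hm.2.2 c hc ⟨s, hs, rfl⟩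
    obtain ⟨p, hp₁, hp₂⟩ := exists_of_append_eq_append_of_length_le hvmeq.symm hcm
    rcases eq_or_ne p [] with rfl | hp
    · rw [append_nil] at hp₁
      rw [nil_append] at hp₂
      subst hp₁ hp₂
      exact hsA (hm.isALSW_left hsc rfl hs)
    · have hplen : p.length < n := by
        have := length_pos_iff.2 hvm
        have := congrArg length hp₁
        simp only [length_append] at this
        omega
      exact ih _ hplen (r := r ++ vm) rfl (by simp [hr]) hp
        (by rw [hurs, hp₁, append_assoc]) (hp₂ ▸ hm.1)

lemma longestALSWProperSuffix_append {u c : List X} (hu : IsALSW u) (hc : IsALSW c)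
    (hu₁ : u.length = 1 ∨ ∃ w, LongestALSWProperSuffix u w ∧ LSLe w c) :
    LongestALSWProperSuffix (u ++ c) c := by
  refine ⟨hc, ⟨u, hu.1, rfl⟩, fun w' hw' ⟨v', hv', h⟩ => ?_⟩
  by_contra hlen
  obtain ⟨p, hp₁, hp₂⟩ := exists_of_append_eq_append_of_length_le h.symm (by omega)
  have hp : p ≠ [] := by
    rintro rfl
    rw [nil_append] at hp₂
    exact hlen (hp₂ ▸ le_rfl)
  rcases hu₁ with h₁ | ⟨w, hl, hwc⟩
  · have := length_pos_iff.2 hv'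
    have := length_pos_iff.2 hp
    have := congrArg length hp₁
    simp only [length_append] at this
    omega
  · exact not_isALSW_append_of_longest hl hc hwc hv' hp hp₁ (hp₂ ▸ hw')

end ALSW

lemma wordOf_mul {X : Type*} (a b : FreeMagma X) : wordOf (a * b) = wordOf a ++ wordOf b := rfl

lemma wordOf_ne_nil {X : Type*} (t : FreeMagma X) : wordOf t ≠ [] := by
  induction t with
  | ih1 x => exact cons_ne_nil x []
  | ih2 a b iha _ => exact append_ne_nil_of_left_ne_nil iha _

lemma one_lt_length_wordOf_mul {X : Type*} (a b : FreeMagma X) : 1 < (wordOf (a * b)).length := by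
  have := length_pos_iff.2 (wordOf_ne_nil a)
  have := length_pos_iff.2 (wordOf_ne_nil b)
  simp only [wordOf, length_append]
  omega

section StdBracketing
variable {X : Type*} [LinearOrder X]

lemma IsStdBracketing.wordOf_eq {u : List X} {t : FreeMagma X} (h : IsStdBracketing u t) :
    wordOf t = u := by
  induction h with
  | of x => rfl
  | mul _ _ _ _ ihv ihw => exact congrArg₂ (· ++ ·) ihv ihw

lemma IsStdBracketing.isALSW {u : List X} {t : FreeMagma X} (h : IsStdBracketing u t) :
    IsALSW u := by
  cases h with
  | of x => exact isALSW_singleton x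
  | mul h _ _ _ => exact h

lemma IsStdBracketing.ne_nil {u : List X} {t : FreeMagma X} (h : IsStdBracketing u t) : u ≠ [] :=
  h.isALSW.1

lemma IsStdBracketing.of_mul {u : List X} {p₁ p₂ : FreeMagma X}
    (h : IsStdBracketing u (p₁ * p₂)) :
    IsStdBracketing (wordOf p₁) p₁ ∧ IsStdBracketing (wordOf p₂) p₂ ∧
      LongestALSWProperSuffix u (wordOf p₂) := by
  cases h with
  | mul _ hl hv hw => rw [hv.wordOf_eq, hw.wordOf_eq]; exact ⟨hv, hw, hl⟩

lemma LongestALSWProperSuffix.eq {u w w' : List X} (h : LongestALSWProperSuffix u w)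
    (h' : LongestALSWProperSuffix u w') : w = w' := by
  obtain ⟨v, hv, rfl⟩ := h.2.1
  obtain ⟨v', hv', hu⟩ := h'.2.1
  exact (append_inj' hu (le_antisymm (h'.2.2 w h.1 ⟨v, hv, rfl⟩)
    (h.2.2 w' h'.1 ⟨v', hv', hu⟩))).2

lemma IsStdBracketing.unique {u : List X} {t t' : FreeMagma X} (h : IsStdBracketing u t)
    (h' : IsStdBracketing u t') : t = t' := by
  have hword := h.wordOf_eq.trans h'.wordOf_eq.symm
  induction t generalizing u t' with
  | ih1 x =>
    cases t' with
    | of y =>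
      obtain rfl : x = y := by simpa [wordOf] using hword
      rfl
    | mul a b =>
      simpa [wordOf] using (one_lt_length_wordOf_mul a b).trans_eq (congrArg length hword.symm)
  | ih2 a b iha ihb =>
    cases t' with
    | of y =>
      simpa [wordOf] using (one_lt_length_wordOf_mul a b).trans_eq (congrArg length hword)
    | mul a' b' =>
      obtain ⟨ha, hb, hl⟩ := h.of_mul
      obtain ⟨ha', hb', hl'⟩ := h'.of_mul
      have hw : wordOf b = wordOf b' := hl.eq hl'
      have hv : wordOf a = wordOf a' :=
        append_cancel_right (bs := wordOf b) (by simpa [wordOf, hw] using hword)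
      rw [iha ha (hv ▸ ha') hv, ihb hb (hw ▸ hb') hw]
      rfl

lemma IsStdBracketing.mul_of_lslt {p q : FreeMagma X} (hp : IsStdBracketing (wordOf p) p)
    (hq : IsStdBracketing (wordOf q) q) (hqp : LSLt (wordOf q) (wordOf p))
    (h : ∀ p₁ p₂, p = p₁ * p₂ → LSLe (wordOf p₂) (wordOf q)) :
    IsStdBracketing (wordOf (p * q)) (p * q) := by
  refine .mul (hp.isALSW.append hq.isALSW hqp)
    (longestALSWProperSuffix_append hp.isALSW hq.isALSW ?_) hp hq
  cases p with
  | of x => exact Or.inl rfl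
  | mul p₁ p₂ => exact Or.inr ⟨wordOf p₂, hp.of_mul.2.2, h p₁ p₂ rfl⟩

lemma wordOf_val_injective :
    Function.Injective fun t : {t : FreeMagma X // IsStdBracketing (wordOf t) t} => wordOf t.val :=
  fun s t (h : wordOf s.val = wordOf t.val) =>
    Subtype.ext ((h ▸ s.2 : IsStdBracketing (wordOf t.val) s.val).unique t.2)

end StdBracketing

section LeadingWord
variable {k X : Type*} [Field k]

lemma coeffW_sub (f g : FreeAssocAlg k X) (u : List X) :
    coeffW (f - g) u = coeffW f u - coeffW g u :=
  Finsupp.sub_apply _ _ _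

lemma exists_of_coeffW_mul_ne_zero {f g : FreeAssocAlg k X} {w : List X}
    (h : coeffW (f * g) w ≠ 0) :
    ∃ a b, w = a ++ b ∧ coeffW f a ≠ 0 ∧ coeffW g b ≠ 0 := by
  classical
  obtain ⟨a, ha, b, hb, hab⟩ :=
    Finset.mem_mul.1 (MonoidAlgebra.support_coeff_mul_subset f g (Finsupp.mem_support_iff.2 h))
  exact ⟨a.toList, b.toList, congrArg FreeMonoid.toList hab.symm,
    Finsupp.mem_support_iff.1 ha, Finsupp.mem_support_iff.1 hb⟩

lemma coeffW_mul_append {f g : FreeAssocAlg k X} {u : List X}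
    (hf : ∀ a, coeffW f a ≠ 0 → a.length = u.length) (v : List X) :
    coeffW (f * g) (u ++ v) = coeffW f u * coeffW g v :=
  MonoidAlgebra.coeff_mul_mul_of_uniqueMul fun a _ ha _ hab =>
    append_inj hab (hf a.toList (Finsupp.mem_support_iff.1 ha))

lemma coeffW_linearCombination {ι : Type*} (f : ι → FreeAssocAlg k X) (l : ι →₀ k)
    (u : List X) :
    coeffW (Finsupp.linearCombination k f l) u = ∑ i ∈ l.support, l i * coeffW (f i) u := by
  simp [coeffW, Finsupp.linearCombination_apply, Finsupp.sum, MonoidAlgebra.coeff_sum,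
    Finsupp.finsetSum_apply]

lemma evalC_mul (a b : FreeMagma X) : evalC (k := k) (a * b) = ⁅evalC (k := k) a, evalC b⁆ :=
  (Ring.lie_def _ _).symm

variable [LinearOrder X]

def SupportedBelow (f : FreeAssocAlg k X) (u : List X) : Prop :=
  ∀ w, coeffW f w ≠ 0 → w.Perm u ∧ LSLe w u

def LeadsWith (f : FreeAssocAlg k X) (u : List X) : Prop :=
  coeffW f u = 1 ∧ SupportedBelow f u

lemma SupportedBelow.mul {f g : FreeAssocAlg k X} {a b : List X} (hf : SupportedBelow f a)
    (hg : SupportedBelow g b) : SupportedBelow (f * g) (a ++ b) := by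
  intro w hw
  obtain ⟨a', b', rfl, ha', hb'⟩ := exists_of_coeffW_mul_ne_zero hw
  obtain ⟨hpa, hla⟩ := hf a' ha'
  obtain ⟨hpb, hlb⟩ := hg b' hb'
  exact ⟨hpa.append hpb, (hla.append_of_length_eq hpa.length_eq b').trans (hlb.append_left a)⟩

lemma leadsWith_gen (x : X) : LeadsWith (gen k x) [x] := by
  classical
  refine ⟨Finsupp.single_eq_same, fun w hw => ?_⟩
  obtain rfl : [x] = w := by
    by_contra hne
    exact hw (Finsupp.single_eq_of_ne (Ne.symm hne))
  exact ⟨Perm.refl _, lsle_refl _⟩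

lemma LeadsWith.lie {f g : FreeAssocAlg k X} {v w : List X} (hf : LeadsWith f v)
    (hg : LeadsWith g w) (hwv : LSLt (w ++ v) (v ++ w)) : LeadsWith ⁅f, g⁆ (v ++ w) := by
  have hgf : SupportedBelow (g * f) (v ++ w) := fun u hu =>
    have ⟨hp, hl⟩ := hg.2.mul hf.2 u hu
    ⟨hp.trans perm_append_comm, (hl.trans_lslt hwv).lsle⟩
  have hgf₀ : coeffW (g * f) (v ++ w) = 0 := by
    by_contra h
    exact lslt_irrefl _ ((hg.2.mul hf.2 _ h).2.trans_lslt hwv)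
  refine ⟨?_, fun u hu => ?_⟩
  · rw [Ring.lie_def, coeffW_sub, hgf₀, sub_zero,
      coeffW_mul_append (fun a ha => (hf.2 a ha).1.length_eq), hf.1, hg.1, one_mul]
  · rw [Ring.lie_def, coeffW_sub] at hu
    by_cases h : coeffW (f * g) u = 0
    · exact hgf u (by simpa [h] using hu)
    · exact hf.2.mul hg.2 u h

lemma IsStdBracketing.leadsWith {u : List X} {t : FreeMagma X} (h : IsStdBracketing u t) :
    LeadsWith (evalC (k := k) t) u := by
  induction h with
  | of x => exact leadsWith_gen x
  | mul halsw _ hv hw ihv ihw =>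
    rw [evalC_mul]
    exact ihv.lie ihw
      (hv.isALSW.lslt_append_comm hw.isALSW (halsw.lslt_of_append hv.isALSW hw.isALSW))

/-- In a vanishing combination, the largest leading word would occur only once. -/
lemma linearIndependent_of_leadsWith {ι : Type*} {f : ι → FreeAssocAlg k X} {w : ι → List X}
    (hw : Function.Injective w) (h : ∀ i, LeadsWith (f i) (w i)) : LinearIndependent k f := by
  rw [linearIndependent_iff]
  intro l hl
  by_contra hne
  obtain ⟨i, hi, hmax⟩ := l.support.exists_max_image
    (fun i => toLex ((w i).length, lexKey (w i))) (Finsupp.support_nonempty_iff.2 hne)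
  have hother : ∀ j ∈ l.support, j ≠ i → coeffW (f j) (w i) = 0 := by
    intro j hj hji
    by_contra hc
    obtain ⟨hperm, hle⟩ := (h j).2 (w i) hc
    have hkey := hmax j hj
    simp only [Prod.Lex.toLex_le_toLex, hperm.length_eq, lt_irrefl, true_and, false_or] at hkey
    exact hji (hw (lexKey_injective (le_antisymm hkey (lsle_iff_lexKey_le.1 hle))))
  have hcoeff := coeffW_linearCombination f l (w i)
  rw [hl, Finset.sum_eq_single i (fun j hj hji => by rw [hother j hj hji, mul_zero])
    (fun h => absurd hi h), (h i).1, mul_one] at hcoeff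
  exact Finsupp.mem_support_iff.1 hi hcoeff.symm

end LeadingWord

lemma lie_mem_of_forall_lie_mem {R L : Type*} [CommRing R] [LieRing L] [LieAlgebra R L]
    {s : Set L} {p : Submodule R L} {x y : L} (h : ∀ z ∈ s, ⁅x, z⁆ ∈ p)
    (hy : y ∈ Submodule.span R s) : ⁅x, y⁆ ∈ p := by
  have hle : Submodule.span R s ≤ p.comap (LieModule.toEnd R L L x) :=
    Submodule.span_le.2 fun z hz => by simpa using h z hz
  simpa using hle hy

section Rewriting
variable {X : Type*} [LinearOrder X]

/-- A measure making `LSLt` well-founded on the rearrangements of a word. -/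
def lexRank (u : List X) : ℕ := (u.permutations.toFinset.filter (lexKey · ≤ lexKey u)).card

lemma lexRank_lt_lexRank {u v : List X} (hp : u.Perm v) (h : LSLt u v) :
    lexRank u < lexRank v := by
  rw [lslt_iff_lexKey_lt] at h
  unfold lexRank
  rw [toFinset_eq_of_perm _ _ hp.permutations]
  refine Finset.card_lt_card ((Finset.ssubset_iff_of_subset ?_).2 ⟨v, ?_, ?_⟩)
  · intro w hw
    simp only [Finset.mem_filter] at hw ⊢
    exact ⟨hw.1, hw.2.trans h.le⟩
  · simp [mem_permutations]
  · simp [h]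

def bracketMeasure (p q : FreeMagma X) : ℕ ×ₗ ℕ ×ₗ ℕ :=
  toLex ((wordOf p ++ wordOf q).length, toLex (lexRank (wordOf p ++ wordOf q), (wordOf p).length))

lemma bracketMeasure_lt_of_length_lt {p q p' q' : FreeMagma X}
    (h : (wordOf p' ++ wordOf q').length < (wordOf p ++ wordOf q).length) :
    bracketMeasure p' q' < bracketMeasure p q :=
  Prod.Lex.toLex_lt_toLex.2 (Or.inl h)

lemma bracketMeasure_lt_of_lslt {p q p' q' : FreeMagma X}
    (hp : (wordOf p' ++ wordOf q').Perm (wordOf p ++ wordOf q))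
    (h : LSLt (wordOf p' ++ wordOf q') (wordOf p ++ wordOf q)) :
    bracketMeasure p' q' < bracketMeasure p q :=
  Prod.Lex.toLex_lt_toLex.2 (Or.inr ⟨hp.length_eq,
    Prod.Lex.toLex_lt_toLex.2 (Or.inl (lexRank_lt_lexRank hp h))⟩)

lemma bracketMeasure_lt_of_eq {p q p' q' : FreeMagma X}
    (h : wordOf p' ++ wordOf q' = wordOf p ++ wordOf q)
    (hl : (wordOf p').length < (wordOf p).length) :
    bracketMeasure p' q' < bracketMeasure p q :=
  Prod.Lex.toLex_lt_toLex.2 (Or.inr ⟨congrArg length h,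
    Prod.Lex.toLex_lt_toLex.2 (Or.inr ⟨congrArg lexRank h, hl⟩)⟩)

variable {k : Type*} [Field k]

variable (k) in
noncomputable def stdSpan (L : List X) : Submodule k (FreeAssocAlg k X) :=
  Submodule.span k (evalC ''
    {t | IsStdBracketing (wordOf t) t ∧ (wordOf t).Perm L ∧ LSLe (wordOf t) L})

lemma stdSpan_mono {L' L : List X} (hp : L'.Perm L) (hl : LSLe L' L) :
    stdSpan k L' ≤ stdSpan k L :=
  Submodule.span_mono (Set.image_mono fun _ ⟨ht, htp, htl⟩ => ⟨ht, htp.trans hp, htl.trans hl⟩)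

lemma evalC_mem_stdSpan {t : FreeMagma X} (ht : IsStdBracketing (wordOf t) t) :
    evalC t ∈ stdSpan k (wordOf t) :=
  Submodule.subset_span ⟨t, ⟨ht, Perm.refl _, lsle_refl _⟩, rfl⟩

variable (k) in
/-- The induction hypothesis of the rewriting argument at the pair `(p, q)`. -/
def BracketsReduceBelow (p q : FreeMagma X) : Prop :=
  ∀ p' q' : FreeMagma X, bracketMeasure p' q' < bracketMeasure p q →
    IsStdBracketing (wordOf p') p' → IsStdBracketing (wordOf q') q' →
      LSLt (wordOf q') (wordOf p') →
        ⁅evalC (k := k) p', evalC q'⁆ ∈ stdSpan k (wordOf p' ++ wordOf q')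

lemma BracketsReduceBelow.lie_mem_stdSpan_of_lslt {p q x y : FreeMagma X}
    (ih : BracketsReduceBelow k p q) (hx : IsStdBracketing (wordOf x) x)
    (hy : IsStdBracketing (wordOf y) y) (hyx : LSLt (wordOf y) (wordOf x))
    (hp : (wordOf x ++ wordOf y).Perm (wordOf p ++ wordOf q))
    (h : LSLt (wordOf x ++ wordOf y) (wordOf p ++ wordOf q)) :
    ⁅evalC (k := k) x, evalC y⁆ ∈ stdSpan k (wordOf p ++ wordOf q) :=
  stdSpan_mono hp h.lsle (ih x y (bracketMeasure_lt_of_lslt hp h) hx hy hyx)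

lemma BracketsReduceBelow.lie_evalC_right_mem {p₁ p₂ q b : FreeMagma X}
    (ih : BracketsReduceBelow k (p₁ * p₂) q) (hp : IsStdBracketing (wordOf (p₁ * p₂)) (p₁ * p₂))
    (hq : IsStdBracketing (wordOf q) q) (hq₂ : LSLt (wordOf q) (wordOf p₂))
    (hb : IsStdBracketing (wordOf b) b) (hbp : (wordOf b).Perm (wordOf p₁ ++ wordOf q))
    (hbl : LSLe (wordOf b) (wordOf p₁ ++ wordOf q)) :
    ⁅evalC (k := k) p₂, evalC b⁆ ∈ stdSpan k (wordOf (p₁ * p₂) ++ wordOf q) := by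
  obtain ⟨hp₁, hp₂, -⟩ := hp.of_mul
  have h₂₁ : LSLt (wordOf p₂) (wordOf p₁) := hp.isALSW.lslt_of_append hp₁.isALSW hp₂.isALSW
  have hperm : (wordOf p₂ ++ wordOf b).Perm (wordOf (p₁ * p₂) ++ wordOf q) :=
    perm_iff_count.2 fun a => by simp only [wordOf_mul, count_append, hbp.count_eq]; omega
  rcases lslt_trichotomy (wordOf b) (wordOf p₂) with hlt | heq | hgt
  · refine ih.lie_mem_stdSpan_of_lslt hp₂ hb hlt hperm ?_
    have h₂₁q : LSLt (wordOf p₂ ++ wordOf p₁ ++ wordOf q) (wordOf (p₁ * p₂) ++ wordOf q) :=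
      (hp₁.isALSW.lslt_append_comm hp₂.isALSW h₂₁).append_of_length_le
        (by simp [Nat.add_comm]) _ _
    rw [append_assoc] at h₂₁q
    exact (hbl.append_left _).trans_lslt h₂₁q
  · rw [hb.unique (heq ▸ hp₂), lie_self]
    exact zero_mem _
  · rw [← lie_skew]
    refine neg_mem (ih.lie_mem_stdSpan_of_lslt hb hp₂ hgt (perm_append_comm.trans hperm) ?_)
    have hq₂' : LSLt (wordOf p₁ ++ (wordOf q ++ wordOf p₂)) (wordOf (p₁ * p₂) ++ wordOf q) := by
      rw [wordOf_mul, append_assoc, lslt_append_left_iff]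
      exact hp₂.isALSW.lslt_append_comm hq.isALSW hq₂
    rw [← append_assoc] at hq₂'
    exact (hbl.append_of_length_eq hbp.length_eq _).trans_lslt hq₂'

lemma BracketsReduceBelow.lie_evalC_left_mem {p₁ p₂ q b : FreeMagma X}
    (ih : BracketsReduceBelow k (p₁ * p₂) q) (hp : IsStdBracketing (wordOf (p₁ * p₂)) (p₁ * p₂))
    (hq : IsStdBracketing (wordOf q) q) (hb : IsStdBracketing (wordOf b) b)
    (hbp : (wordOf b).Perm (wordOf p₂ ++ wordOf q))
    (hbl : LSLe (wordOf b) (wordOf p₂ ++ wordOf q)) :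
    ⁅evalC (k := k) p₁, evalC b⁆ ∈ stdSpan k (wordOf (p₁ * p₂) ++ wordOf q) := by
  obtain ⟨hp₁, hp₂, -⟩ := hp.of_mul
  have hb₁ : LSLt (wordOf b) (wordOf p₁) := (hbl.trans_lslt (lslt_append_self hq.ne_nil)).trans
    (hp.isALSW.lslt_of_append hp₁.isALSW hp₂.isALSW)
  rcases hbl with heq | hlt
  · have hword : wordOf p₁ ++ wordOf b = wordOf (p₁ * p₂) ++ wordOf q := by
      rw [heq, wordOf_mul, append_assoc]
    have hlen : (wordOf p₁).length < (wordOf (p₁ * p₂)).length := by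
      simpa [wordOf_mul] using length_pos_iff.2 hp₂.ne_nil
    exact hword ▸ ih p₁ b (bracketMeasure_lt_of_eq hword hlen) hp₁ hb hb₁
  · refine ih.lie_mem_stdSpan_of_lslt hp₁ hb hb₁ ?_ ?_
    · rw [wordOf_mul, append_assoc]
      exact hbp.append_left _
    · rw [wordOf_mul, append_assoc, lslt_append_left_iff]
      exact hlt

lemma BracketsReduceBelow.lie_evalC_mul_mem {p₁ p₂ q : FreeMagma X}
    (ih : BracketsReduceBelow k (p₁ * p₂) q) (hp : IsStdBracketing (wordOf (p₁ * p₂)) (p₁ * p₂))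
    (hq : IsStdBracketing (wordOf q) q) (hq₂ : LSLt (wordOf q) (wordOf p₂)) :
    ⁅evalC (k := k) (p₁ * p₂), evalC q⁆ ∈ stdSpan k (wordOf (p₁ * p₂) ++ wordOf q) := by
  obtain ⟨hp₁, hp₂, -⟩ := hp.of_mul
  have h₂₁ : LSLt (wordOf p₂) (wordOf p₁) := hp.isALSW.lslt_of_append hp₁.isALSW hp₂.isALSW
  have hshorter : ∀ {r : FreeMagma X}, (wordOf r).length < (wordOf (p₁ * p₂)).length →
      bracketMeasure r q < bracketMeasure (p₁ * p₂) q := fun h =>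
    bracketMeasure_lt_of_length_lt (by simpa using h)
  have h₁q := ih p₁ q (hshorter (by simpa [wordOf_mul] using length_pos_iff.2 hp₂.ne_nil))
    hp₁ hq (hq₂.trans h₂₁)
  have h₂q := ih p₂ q (hshorter (by simpa [wordOf_mul] using length_pos_iff.2 hp₁.ne_nil))
    hp₂ hq hq₂
  rw [evalC_mul, lie_lie]
  refine sub_mem (lie_mem_of_forall_lie_mem ?_ h₂q) (lie_mem_of_forall_lie_mem ?_ h₁q)
  · rintro _ ⟨b, ⟨hb, hbp, hbl⟩, rfl⟩
    exact ih.lie_evalC_left_mem hp hq hb hbp hbl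
  · rintro _ ⟨b, ⟨hb, hbp, hbl⟩, rfl⟩
    exact ih.lie_evalC_right_mem hp hq hq₂ hb hbp hbl

lemma BracketsReduceBelow.lie_evalC_mem {p q : FreeMagma X} (ih : BracketsReduceBelow k p q)
    (hp : IsStdBracketing (wordOf p) p) (hq : IsStdBracketing (wordOf q) q)
    (hqp : LSLt (wordOf q) (wordOf p)) :
    ⁅evalC (k := k) p, evalC q⁆ ∈ stdSpan k (wordOf p ++ wordOf q) := by
  by_cases h : ∀ p₁ p₂, p = p₁ * p₂ → LSLe (wordOf p₂) (wordOf q)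
  · rw [← evalC_mul, ← wordOf_mul]
    exact evalC_mem_stdSpan (hp.mul_of_lslt hq hqp h)
  · simp only [not_forall] at h
    obtain ⟨p₁, p₂, rfl, h⟩ := h
    exact ih.lie_evalC_mul_mem hp hq (lslt_of_not_lsle h)

theorem lie_evalC_mem_stdSpan {p q : FreeMagma X} (hp : IsStdBracketing (wordOf p) p)
    (hq : IsStdBracketing (wordOf q) q) (hqp : LSLt (wordOf q) (wordOf p)) :
    ⁅evalC (k := k) p, evalC q⁆ ∈ stdSpan k (wordOf p ++ wordOf q) := by
  induction hm : bracketMeasure p q using WellFoundedLT.induction generalizing p q with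
  | _ m ih =>
    exact BracketsReduceBelow.lie_evalC_mem
      (fun _ _ h hp' hq' hqp' => ih _ (hm ▸ h) hp' hq' hqp' rfl) hp hq hqp

end Rewriting

lemma lie_mem_of_mem_span {R L : Type*} [CommRing R] [LieRing L] [LieAlgebra R L]
    {s : Set L} {p : Submodule R L} {x y : L} (h : ∀ x ∈ s, ∀ y ∈ s, ⁅x, y⁆ ∈ p)
    (hx : x ∈ Submodule.span R s) (hy : y ∈ Submodule.span R s) : ⁅x, y⁆ ∈ p := by
  refine lie_mem_of_forall_lie_mem (fun z hz => ?_) hy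
  rw [← lie_skew]
  exact neg_mem (lie_mem_of_forall_lie_mem (h z hz) hx)

lemma evalC_mem_lieX {k X : Type*} [Field k] (t : FreeMagma X) : evalC (k := k) t ∈ LieX k X := by
  induction t with
  | ih1 x => exact LieSubalgebra.subset_lieSpan ⟨x, rfl⟩
  | ih2 a b iha ihb =>
    rw [evalC_mul]
    exact LieSubalgebra.lie_mem _ iha ihb

section Basis
variable {k X : Type*} [Field k] [LinearOrder X]

variable (k X) in
noncomputable def nlswSpan : Submodule k (FreeAssocAlg k X) :=
  Submodule.span k
    (Set.range fun t : {t : FreeMagma X // IsStdBracketing (wordOf t) t} => evalC (k := k) t.val)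

lemma stdSpan_le_nlswSpan (L : List X) : stdSpan k L ≤ nlswSpan k X :=
  Submodule.span_mono (by rintro _ ⟨t, ⟨ht, -, -⟩, rfl⟩; exact ⟨⟨t, ht⟩, rfl⟩)

lemma lie_evalC_mem_nlswSpan {p q : FreeMagma X} (hp : IsStdBracketing (wordOf p) p)
    (hq : IsStdBracketing (wordOf q) q) : ⁅evalC (k := k) p, evalC q⁆ ∈ nlswSpan k X := by
  rcases lslt_trichotomy (wordOf q) (wordOf p) with hlt | heq | hgt
  · exact stdSpan_le_nlswSpan _ (lie_evalC_mem_stdSpan hp hq hlt)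
  · rw [hp.unique (heq ▸ hq), lie_self]
    exact zero_mem _
  · rw [← lie_skew]
    exact neg_mem (stdSpan_le_nlswSpan _ (lie_evalC_mem_stdSpan hq hp hgt))

theorem nlswSpan_eq_lieX : nlswSpan k X = (LieX k X).toSubmodule := by
  refine le_antisymm (Submodule.span_le.2 ?_) ?_
  · rintro _ ⟨t, rfl⟩
    exact evalC_mem_lieX t.val
  · let K : LieSubalgebra k (FreeAssocAlg k X) :=
      { nlswSpan k X with
        lie_mem' := fun hx hy => lie_mem_of_mem_span (p := nlswSpan k X) (by
          rintro _ ⟨p, rfl⟩ _ ⟨q, rfl⟩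
          exact lie_evalC_mem_nlswSpan p.2 q.2) hx hy }
    have hK : LieX k X ≤ K := LieSubalgebra.lieSpan_le.2 (by
      rintro _ ⟨x, rfl⟩
      exact Submodule.subset_span ⟨⟨.of x, .of x⟩, rfl⟩)
    exact fun _ hx => hK hx

end Basis

/-- The non-associative Lyndon–Shirshov words form a linear
basis of the free Lie algebra `Lie(X)`, realized as the Lie subalgebra of
`k⟨X⟩` generated by `X` under the commutator bracket. -/
theorem nlsw_basis_of_lieX {k X : Type*} [Field k] [LinearOrder X] :
    ∃ b : Module.Basis {t : FreeMagma X // IsStdBracketing (wordOf t) t} k (LieX k X),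
      ∀ t : {t : FreeMagma X // IsStdBracketing (wordOf t) t},
        (b t : FreeAssocAlg k X) = evalC (k := k) t.val := by
  have hli : LinearIndependent k
      fun t : {t : FreeMagma X // IsStdBracketing (wordOf t) t} => evalC (k := k) t.val :=
    linearIndependent_of_leadsWith wordOf_val_injective fun t => t.2.leadsWith
  refine ⟨(Module.Basis.span hli).map (LinearEquiv.ofEq _ _ nlswSpan_eq_lieX), fun t => ?_⟩
  rw [Module.Basis.map_apply, Module.Basis.span_apply]
  rfl
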